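/- Suppose A ∈ ℝ_max^{n×n} satisfies the transient condition A^{⊗(k+c)} = λc ⊗ A^{⊗k} for all k ≥ k_0 (with λ ∈ ℝ, c ≥ 1). If λ < α, then for every x ∈ ℝ^n and every l ≥ 0 there exists k ≥ l such that [A^{⊗(k+1)} ⊗ x]_i − [A^{⊗k} ⊗ x]_i < α; i.e., the specification 'eventually always t_i ≥ α' fails along every orbit. -/

import Mathlib

noncomputable def mpMul {n : ℕ} (A B : Fin n → Fin n → WithBot ℝ) :
    Fin n → Fin n → WithBot ℝ :=
  fun i j => Finset.univ.sup (fun k => A i k + B k j)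

/-- Max-plus power: `A^{⊗0}` is the max-plus identity, `A^{⊗(k+1)} = A ⊗ A^{⊗k}`. -/
noncomputable def mpPow {n : ℕ} (A : Fin n → Fin n → WithBot ℝ) : ℕ → Fin n → Fin n → WithBot ℝ
  | 0 => fun i j => if i = j then (0 : WithBot ℝ) else ⊥
  | k + 1 => mpMul A (mpPow A k)

noncomputable def mpApp {n : ℕ} (A : Fin n → Fin n → WithBot ℝ) (x : Fin n → ℝ) :
    Fin n → WithBot ℝ :=
  fun i => Finset.univ.sup (fun j => A i j + (x j : WithBot ℝ))

def MPRegular {n : ℕ} (A : Fin n → Fin n → WithBot ℝ) : Prop :=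
  ∀ i, ∃ j, A i j ≠ ⊥

/-!
For `k ≥ k₀` the transient condition gives `x(k + c) = c λ + x(k)` along every orbit, so the `c`
consecutive time differences `t_i(k), …, t_i(k + c - 1)` sum to `c λ < c α`, and one of them is
below `α`.
-/

lemma coe_add_finset_sup {ι : Type*} (r : ℝ) (s : Finset ι) (f : ι → WithBot ℝ) :
    (r : WithBot ℝ) + s.sup f = s.sup (fun b => (r : WithBot ℝ) + f b) :=
  Finset.apply_sup_eq_sup_comp (fun z : WithBot ℝ => (r : WithBot ℝ) + z)
    (fun _ _ => (add_right_mono (a := (r : WithBot ℝ))).map_max) (WithBot.add_bot _)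

lemma mpApp_const_add {n : ℕ} (A : Fin n → Fin n → WithBot ℝ) (r : ℝ) (x : Fin n → ℝ)
    (j : Fin n) :
    mpApp (fun i k => (r : WithBot ℝ) + A i k) x j = (r : WithBot ℝ) + mpApp A x j := by
  simp only [mpApp, coe_add_finset_sup, add_assoc]

lemma orbit_add_period {n : ℕ} {A : Fin n → Fin n → WithBot ℝ} {lam : ℝ} {k₀ c : ℕ}
    (htrans : ∀ k ≥ k₀, ∀ i j, mpPow A (k + c) i j = ((c * lam : ℝ) : WithBot ℝ) + mpPow A k i j)
    {x : Fin n → ℝ} {y : ℕ → Fin n → ℝ}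
    (hy : ∀ k j, mpApp (mpPow A k) x j = ((y k j : ℝ) : WithBot ℝ)) {k : ℕ} (hk : k₀ ≤ k)
    (j : Fin n) : y (k + c) j = c * lam + y k j := by
  have h : mpPow A (k + c) = fun i m => ((c * lam : ℝ) : WithBot ℝ) + mpPow A k i m :=
    funext fun i => funext (htrans k hk i)
  have := hy (k + c) j
  rw [h, mpApp_const_add, hy k j] at this
  exact_mod_cast this.symm

lemma exists_sub_lt_of_add_eq {u : ℕ → ℝ} {K c : ℕ} {lam α : ℝ} (hc : 1 ≤ c) (hlam : lam < α)
    (hu : u (K + c) = c * lam + u K) : ∃ m < c, u (K + m + 1) - u (K + m) < α := by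
  have hsum : ∑ m ∈ Finset.range c, (u (K + (m + 1)) - u (K + m)) = c * lam := by
    rw [Finset.sum_range_sub (fun m => u (K + m)), add_zero, hu, add_sub_cancel_right]
  have hlt : ∑ m ∈ Finset.range c, (u (K + (m + 1)) - u (K + m)) < ∑ _m ∈ Finset.range c, α := by
    rw [hsum, Finset.sum_const, Finset.card_range, nsmul_eq_mul]
    exact mul_lt_mul_of_pos_left hlam (by exact_mod_cast hc)
  obtain ⟨m, hm, hlt⟩ := Finset.exists_lt_of_sum_lt hlt
  exact ⟨m, Finset.mem_range.mp hm, hlt⟩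

theorem eventually_always_ge_fails_general {n : ℕ} (A : Fin n → Fin n → WithBot ℝ)
    (lam α : ℝ) (k₀ c : ℕ) (hc : 1 ≤ c) (hlam : lam < α)
    (htrans : ∀ k ≥ k₀, ∀ i j, mpPow A (k + c) i j = ((c * lam : ℝ) : WithBot ℝ) + mpPow A k i j)
    (i : Fin n) :
    ∀ x : Fin n → ℝ, ∀ y : ℕ → Fin n → ℝ,
      (∀ k j, mpApp (mpPow A k) x j = ((y k j : ℝ) : WithBot ℝ)) →
      ∀ l : ℕ, ∃ k ≥ l, y (k + 1) i - y k i < α := by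
  intro x y hy l
  obtain ⟨m, -, hm⟩ := exists_sub_lt_of_add_eq (u := fun k => y k i) hc hlam
    (orbit_add_period htrans hy (le_max_right l k₀) i)
  exact ⟨max l k₀ + m, le_add_right (le_max_left l k₀), hm⟩

/-- If `λ < α`, the specification "eventually always `t_i ≥ α`" fails along every orbit:
    for every `x` and every `l` there is `k ≥ l` with `x_i(k+1) − x_i(k) < α`. -/
theorem eventually_always_ge_fails {n : ℕ} (A : Fin n → Fin n → WithBot ℝ)
    (hA : MPRegular A) (lam α : ℝ) (k₀ c : ℕ) (hc : 1 ≤ c) (hlam : lam < α)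
    (htrans : ∀ k ≥ k₀, ∀ i j, mpPow A (k + c) i j = ((c * lam : ℝ) : WithBot ℝ) + mpPow A k i j)
    (i : Fin n) :
    ∀ x : Fin n → ℝ, ∀ y : ℕ → Fin n → ℝ,
      (∀ k j, mpApp (mpPow A k) x j = ((y k j : ℝ) : WithBot ℝ)) →
      ∀ l : ℕ, ∃ k ≥ l, y (k + 1) i - y k i < α :=
  eventually_always_ge_fails_general A lam α k₀ c hc hlam htrans i
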